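/- Let κ_min = min_{q∈G} κ_q and η_max = max_{q∈G} η_q, suppose ⌊m/κ_min⌋ · η_max ≤ 1, and let ψ_G be any representation scenario compliant with the representative ranges κ_G. Then there exists an RSCF φ : 𝒟^n → Δ(A) that is unanimous, strategy-proof, group-wise anonymous, and (κ_G,ψ_G,η_G)-strong fair. -/

import Mathlib

open Finset

/-! ### Preferences and the single-peaked domain -/

/-- A strict preference over the `m+1` alternatives `Fin (m+1)`:
`P k` is the alternative ranked `k`-th (`0`-indexed, so `P 0` is the top). -/
abbrev Pref (m : ℕ) := Equiv.Perm (Fin (m + 1))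

/-- Single-peakedness w.r.t. the prior linear order on `Fin (m+1)`. -/
def SinglePeaked {m : ℕ} (P : Pref m) : Prop :=
  ∀ a b : Fin (m + 1), ((P 0 ≤ a ∧ a < b) ∨ (b < a ∧ a ≤ P 0)) → P.symm a < P.symm b

/-- The single-peaked domain `𝒟`. -/
abbrev SPPref (m : ℕ) := {P : Pref m // SinglePeaked P}

/-- Top-ranked alternative of a preference. -/
def peak {m : ℕ} (P : SPPref m) : Fin (m + 1) := P.val 0

/-- The upper contour set `U(a, P)` of the alternative `a` at `P`. -/
def UC {m : ℕ} (P : SPPref m) (a : Fin (m + 1)) : Finset (Fin (m + 1)) :=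
  univ.filter fun b => P.val.symm b ≤ P.val.symm a

/-- The set of the `k` top-ranked alternatives of `P`, i.e. `U(P(k), P)`. -/
def topSet {m : ℕ} (P : SPPref m) (k : ℕ) : Finset (Fin (m + 1)) :=
  univ.filter fun b => (P.val.symm b : ℕ) < k

/-- A profile of single-peaked preferences, one for each of the `n` agents. -/
abbrev Profile (m n : ℕ) := Fin n → SPPref m

/-- A random social choice function, recorded via its probabilities. -/
abbrev RSCF (m n : ℕ) := Profile m n → Fin (m + 1) → ℝ

def IsProb {m : ℕ} (p : Fin (m + 1) → ℝ) : Prop :=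
  (∀ a, 0 ≤ p a) ∧ ∑ a, p a = 1

/-- `φ` genuinely maps into `Δ(A)`. -/
def IsRSCF {m n : ℕ} (φ : RSCF m n) : Prop := ∀ P, IsProb (φ P)

/-- `φ_B(P)`, the probability of the set `B` at profile `P`. -/
def probOn {m n : ℕ} (φ : RSCF m n) (P : Profile m n) (B : Finset (Fin (m + 1))) : ℝ :=
  ∑ b ∈ B, φ P b

def Unanimous {m n : ℕ} (φ : RSCF m n) : Prop :=
  ∀ (P : Profile m n) (a : Fin (m + 1)), (∀ i, peak (P i) = a) → φ P a = 1

def StrategyProof {m n : ℕ} (φ : RSCF m n) : Prop :=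
  ∀ (i : Fin n) (P : Profile m n) (P' : SPPref m) (a : Fin (m + 1)),
    probOn φ (Function.update P i P') (UC (P i) a) ≤ probOn φ P (UC (P i) a)

def Anonymous {m n : ℕ} (φ : RSCF m n) : Prop :=
  ∀ (σ : Equiv.Perm (Fin n)) (P : Profile m n), φ P = φ fun i => P (σ i)

/-! ### Deterministic social choice functions -/

def DUnanimous {m n : ℕ} (f : Profile m n → Fin (m + 1)) : Prop :=
  ∀ (P : Profile m n) (a : Fin (m + 1)), (∀ i, peak (P i) = a) → f P = a

def DStrategyProof {m n : ℕ} (f : Profile m n → Fin (m + 1)) : Prop :=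
  ∀ (i : Fin n) (P : Profile m n) (P' : SPPref m) (a : Fin (m + 1)),
    f (Function.update P i P') ∈ UC (P i) a → f P ∈ UC (P i) a

/-! ### Probabilistic fixed ballot rules -/

def IsPFBRWith {m n : ℕ} (β : Finset (Fin n) → Fin (m + 1) → ℝ) (φ : RSCF m n) : Prop :=
  (∀ S, IsProb (β S)) ∧
  β ∅ (Fin.last m) = 1 ∧
  β univ 0 = 1 ∧
  (∀ S T : Finset (Fin n), S ⊆ T → ∀ t : Fin (m + 1),
    ∑ b ∈ Iic t, β S b ≤ ∑ b ∈ Iic t, β T b) ∧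
  ∀ (P : Profile m n) (t : Fin (m + 1)),
    φ P t = (∑ b ∈ Iic t, β (univ.filter fun i => peak (P i) ≤ t) b)
          - ∑ b ∈ Iio t, β (univ.filter fun i => peak (P i) < t) b

def IsPFBR {m n : ℕ} (φ : RSCF m n) : Prop := ∃ β, IsPFBRWith β φ

/-! ### Min-max rules -/

def minmaxOutcome {m n : ℕ} (β : Finset (Fin n) → Fin (m + 1)) (P : Profile m n) :
    Fin (m + 1) :=
  (univ : Finset (Finset (Fin n))).inf' univ_nonempty fun S =>
    (insert (β S) (S.image fun i => peak (P i))).max' (insert_nonempty _ _)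

def MinMaxParams {m n : ℕ} (β : Finset (Fin n) → Fin (m + 1)) : Prop :=
  β ∅ = Fin.last m ∧ β univ = 0 ∧ ∀ S T : Finset (Fin n), S ⊆ T → β T ≤ β S

def IsMinMax {m n : ℕ} (f : Profile m n → Fin (m + 1)) : Prop :=
  ∃ β, MinMaxParams β ∧ ∀ P, f P = minmaxOutcome β P

/-- `φ` is the mixture of the deterministic rules `F w` with weights `lam w`. -/
def IsMixture {m n : ℕ} (φ : RSCF m n) (k : ℕ) (lam : Fin k → ℝ)
    (F : Fin k → Profile m n → Fin (m + 1)) : Prop :=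
  (∀ w, 0 ≤ lam w) ∧ (∑ w, lam w = 1) ∧
  ∀ P a, φ P a = ∑ w, lam w * (if F w P = a then (1 : ℝ) else 0)

/-! ### Groups -/

/-- Size of the group `q` of the partition described by `grp`. -/
def gsize {n g : ℕ} (grp : Fin n → Fin g) (q : Fin g) : ℕ :=
  (univ.filter fun i => grp i = q).card

lemma count_le_n {n : ℕ} (p : Fin n → Prop) [DecidablePred p] :
    (univ.filter p).card ≤ n := by
  simpa using card_filter_le (univ : Finset (Fin n)) p

/-- Membership in `Γ`: each component is at most the size of the corresponding group. -/
def GammaValid {n g : ℕ} (grp : Fin n → Fin g) (γ : Fin g → Fin (n + 1)) : Prop :=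
  ∀ q, (γ q : ℕ) ≤ gsize grp q

/-- The maximal element `γ̄` of `Γ`. -/
def gammaTop {n g : ℕ} (grp : Fin n → Fin g) : Fin g → Fin (n + 1) :=
  fun q => ⟨gsize grp q, Nat.lt_succ_of_le (count_le_n _)⟩

/-- `α(t; P)`: componentwise, the number of agents of each group whose peak is `≤ t`. -/
def alphaVec {m n g : ℕ} (grp : Fin n → Fin g) (P : Profile m n) (t : Fin (m + 1)) :
    Fin g → Fin (n + 1) := fun q =>
  ⟨(univ.filter fun i => grp i = q ∧ peak (P i) ≤ t).card, Nat.lt_succ_of_le (count_le_n _)⟩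

/-- `α(t-1; P)` in zero-indexed form: agents of each group whose peak is `< t`. -/
def alphaLtVec {m n g : ℕ} (grp : Fin n → Fin g) (P : Profile m n) (t : Fin (m + 1)) :
    Fin g → Fin (n + 1) := fun q =>
  ⟨(univ.filter fun i => grp i = q ∧ peak (P i) < t).card, Nat.lt_succ_of_le (count_le_n _)⟩

def GroupAnon {m n g : ℕ} (grp : Fin n → Fin g) (φ : RSCF m n) : Prop :=
  ∀ π : Equiv.Perm (Fin n), (∀ i, grp (π i) = grp i) →
    ∀ P : Profile m n, φ P = φ fun i => P (π i)

def DGroupAnon {m n g : ℕ} (grp : Fin n → Fin g) (f : Profile m n → Fin (m + 1)) : Prop :=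
  ∀ π : Equiv.Perm (Fin n), (∀ i, grp (π i) = grp i) →
    ∀ P : Profile m n, f P = f fun i => P (π i)

/-! ### Probabilistic fixed group ballot rules -/

def IsPFGBRWith {m n g : ℕ} (grp : Fin n → Fin g)
    (β : (Fin g → Fin (n + 1)) → Fin (m + 1) → ℝ) (φ : RSCF m n) : Prop :=
  (∀ γ, GammaValid grp γ → IsProb (β γ)) ∧
  β (fun _ => 0) (Fin.last m) = 1 ∧
  β (gammaTop grp) 0 = 1 ∧
  (∀ γ γ', GammaValid grp γ → GammaValid grp γ' → (∀ q, γ' q ≤ γ q) →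
    ∀ t : Fin (m + 1), ∑ b ∈ Iic t, β γ' b ≤ ∑ b ∈ Iic t, β γ b) ∧
  ∀ (P : Profile m n) (t : Fin (m + 1)),
    φ P t = (∑ b ∈ Iic t, β (alphaVec grp P t) b) - ∑ b ∈ Iio t, β (alphaLtVec grp P t) b

def IsPFGBR {m n g : ℕ} (grp : Fin n → Fin g) (φ : RSCF m n) : Prop :=
  ∃ β, IsPFGBRWith grp β φ

/-! ### Group min-max rules -/

/-- `τ_t(P_{N_q})` : the `t`-th smallest peak of group `q` (`τ_0 = a_1`). -/
def tau {m n g : ℕ} (grp : Fin n → Fin g) (P : Profile m n) (q : Fin g) (t : ℕ) :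
    Fin (m + 1) :=
  ((0 : Fin (m + 1)) ::
    Multiset.sort
      ((univ.filter fun i => grp i = q).val.map fun i => peak (P i)) (· ≤ ·)).getD t 0

/-- `Γ` as a finite set. -/
def gammaSet {n g : ℕ} (grp : Fin n → Fin g) : Finset (Fin g → Fin (n + 1)) :=
  univ.filter fun γ => ∀ q, (γ q : ℕ) ≤ gsize grp q

lemma gammaSet_nonempty {n g : ℕ} (grp : Fin n → Fin g) : (gammaSet grp).Nonempty :=
  ⟨fun _ => 0, by simp [gammaSet]⟩

/-- Outcome of the group min-max rule with parameters `β`. -/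
def gmmrOutcome {m n g : ℕ} (grp : Fin n → Fin g)
    (β : (Fin g → Fin (n + 1)) → Fin (m + 1)) (P : Profile m n) : Fin (m + 1) :=
  (gammaSet grp).inf' (gammaSet_nonempty grp) fun γ =>
    (insert (β γ) (univ.image fun q => tau grp P q ((γ q : ℕ)))).max' (insert_nonempty _ _)

def GMMRParams {m n g : ℕ} (grp : Fin n → Fin g)
    (β : (Fin g → Fin (n + 1)) → Fin (m + 1)) : Prop :=
  β (fun _ => 0) = Fin.last m ∧ β (gammaTop grp) = 0 ∧
  ∀ γ γ', GammaValid grp γ → GammaValid grp γ' → (∀ q, γ' q ≤ γ q) → β γ ≤ β γ'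

def IsGMMR {m n g : ℕ} (grp : Fin n → Fin g) (f : Profile m n → Fin (m + 1)) : Prop :=
  ∃ β, GMMRParams grp β ∧ ∀ P, f P = gmmrOutcome grp β P

/-! ### Representation scenarios and group fairness -/

/-- A preference profile of the members of group `q`. -/
abbrev GrpProfile (m : ℕ) {n g : ℕ} (grp : Fin n → Fin g) (q : Fin g) :=
  {i : Fin n // grp i = q} → SPPref m

/-- Restriction of a profile to the members of group `q`. -/
def restrict {m n g : ℕ} (grp : Fin n → Fin g) (P : Profile m n) (q : Fin g) :
    GrpProfile m grp q := fun i => P i.val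

/-- A representation scenario: a representative function for each group. -/
abbrev RepScenario (m : ℕ) {n g : ℕ} (grp : Fin n → Fin g) :=
  (q : Fin g) → GrpProfile m grp q → Finset (Fin (m + 1))

def TopRanged {m n g : ℕ} (grp : Fin n → Fin g) (ψ : RepScenario m grp) (q : Fin g) : Prop :=
  ∀ Pq : GrpProfile m grp q, ∃ a ∈ ψ q Pq, ∃ i j : {i : Fin n // grp i = q},
    peak (Pq i) ≤ a ∧ a ≤ peak (Pq j)

/-- `ψ` is compliant with `κ`: each `ψ q` is top-ranged and always selects an
interval of exactly `κ q` consecutive alternatives. -/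
def Compliant {m n g : ℕ} (grp : Fin n → Fin g) (κ : Fin g → ℕ)
    (ψ : RepScenario m grp) : Prop :=
  ∀ q, TopRanged grp ψ q ∧ ∀ Pq, ∃ x y : Fin (m + 1),
    x ≤ y ∧ (y : ℕ) + 1 = (x : ℕ) + κ q ∧ ψ q Pq = Finset.Icc x y

def GroupWeakFair {m n g : ℕ} (grp : Fin n → Fin g) (ψ : RepScenario m grp)
    (η : Fin g → ℝ) (φ : RSCF m n) : Prop :=
  ∀ (P : Profile m n) (q : Fin g), η q ≤ probOn φ P (ψ q (restrict grp P q))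

def GroupStrongFair {m n g : ℕ} (grp : Fin n → Fin g) (ψ : RepScenario m grp)
    (η : Fin g → ℝ) (φ : RSCF m n) : Prop :=
  ∀ (P : Profile m n) (q : Fin g), ∃ a ∈ ψ q (restrict grp P q), η q ≤ φ P a

/-- `a` is feasible at `(z₁, z₂; ψ q)`. -/
def FeasibleAt {m n g : ℕ} (grp : Fin n → Fin g) (ψ : RepScenario m grp) (q : Fin g)
    (a : Fin (m + 1)) (z₁ z₂ : ℕ) : Prop :=
  ∃ (Pq : GrpProfile m grp q) (c : Fin (m + 1)),
    a ∈ ψ q Pq ∧ (∀ b ∈ ψ q Pq, a ≤ b) ∧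
    c ∈ ψ q Pq ∧ (∀ b ∈ ψ q Pq, b ≤ c) ∧
    (univ.filter fun i : {i : Fin n // grp i = q} => peak (Pq i) < a).card = z₁ ∧
    (univ.filter fun i : {i : Fin n // grp i = q} => c < peak (Pq i)).card = gsize grp q - z₂

/-- The set `{a_x, …, a_{x+k-1}}` is feasible at `(z 0, …, z k; ψ q)`. -/
def SetFeasibleAt {m n g : ℕ} (grp : Fin n → Fin g) (ψ : RepScenario m grp) (q : Fin g)
    (x : Fin (m + 1)) (k : ℕ) (z : Fin (k + 1) → ℕ) : Prop :=
  ∃ Pq : GrpProfile m grp q,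
    x ∈ ψ q Pq ∧ (∀ b ∈ ψ q Pq, x ≤ b) ∧
    (univ.filter fun i : {i : Fin n // grp i = q} => peak (Pq i) < x).card = z 0 ∧
    ∀ j : Fin k, (univ.filter fun i : {i : Fin n // grp i = q} =>
      (peak (Pq i) : ℕ) ≤ (x : ℕ) + (j : ℕ)).card = z j.succ

/-! ### Individual fairness -/

def IndWeakFair {m n : ℕ} (κ : Fin n → ℕ) (η : Fin n → ℝ) (φ : RSCF m n) : Prop :=
  ∀ (P : Profile m n) (i : Fin n), η i ≤ probOn φ P (topSet (P i) (κ i))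

def IndStrongFair {m n : ℕ} (κ : Fin n → ℕ) (η : Fin n → ℝ) (φ : RSCF m n) : Prop :=
  ∀ (P : Profile m n) (i : Fin n), ∃ a ∈ topSet (P i) (κ i), η i ≤ φ P a

/-! ### Median rules -/

/-- The median of the `n` peaks and the `n+1` parameters `β 0, …, β n`. -/
def medianOutcome {m n : ℕ} (β : Fin (n + 1) → Fin (m + 1)) (P : Profile m n) :
    Fin (m + 1) :=
  (Multiset.sort
    ((univ.val.map fun i : Fin n => peak (P i)) +
      (univ.val.map fun j : Fin (n + 1) => β j)) (· ≤ ·)).getD n 0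

def MedianParams {m n : ℕ} (β : Fin (n + 1) → Fin (m + 1)) : Prop :=
  β 0 = 0 ∧ β (Fin.last n) = Fin.last m ∧ Monotone β

/-!
Mix, with equal weights `1/r` where `r = ⌊(m+1)/κ_min⌋`, the `r` deterministic rules that clamp
the cutoff `(t+1)·κ_min - 1` into the interval spanned by the agents' peaks. Such a rule is
unanimous and anonymous, and an agent can only push its outcome away from its own peak, so it
is strategy-proof; these properties pass to the mixture. Every representative interval has at
least `κ_min` alternatives, so it contains some cutoff, and since it also contains a point
between two peaks it contains the clamped cutoff, which gets probability `1/r ≥ η_max`.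
-/

theorem symm_le_symm_of_between {m : ℕ} (Q : SPPref m) {x y : Fin (m + 1)}
    (h : (peak Q ≤ x ∧ x ≤ y) ∨ (y ≤ x ∧ x ≤ peak Q)) :
    Q.val.symm x ≤ Q.val.symm y := by
  rcases eq_or_ne x y with rfl | hxy
  · exact le_rfl
  refine (Q.prop x y ?_).le
  rcases h with ⟨h1, h2⟩ | ⟨h1, h2⟩
  · exact Or.inl ⟨h1, h2.lt_of_ne hxy⟩
  · exact Or.inr ⟨h1.lt_of_ne hxy.symm, h2⟩

theorem dStrategyProof_of_between {m n : ℕ} {f : Profile m n → Fin (m + 1)}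
    (hf : ∀ i P P', (peak (P i) ≤ f P ∧ f P ≤ f (Function.update P i P')) ∨
      (f (Function.update P i P') ≤ f P ∧ f P ≤ peak (P i))) :
    DStrategyProof f := by
  intro i P P' a h
  simp only [UC, mem_filter, mem_univ, true_and] at h ⊢
  exact (symm_le_symm_of_between (P i) (hf i P P')).trans h

section Mixture

variable {m n k : ℕ} {φ : RSCF m n} {lam : Fin k → ℝ} {F : Fin k → Profile m n → Fin (m + 1)}

theorem isMixture_uniform (hk : 0 < k) (F : Fin k → Profile m n → Fin (m + 1)) :
    IsMixture (fun P a => ∑ w, (k : ℝ)⁻¹ * if F w P = a then 1 else 0) k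
      (fun _ => (k : ℝ)⁻¹) F := by
  refine ⟨fun _ => by positivity, ?_, fun _ _ => rfl⟩
  rw [sum_const, card_univ, Fintype.card_fin, nsmul_eq_mul]
  exact mul_inv_cancel₀ (by positivity)

theorem IsMixture.probOn_eq (h : IsMixture φ k lam F) (P : Profile m n)
    (B : Finset (Fin (m + 1))) :
    probOn φ P B = ∑ w, lam w * if F w P ∈ B then 1 else 0 := by
  simp only [probOn, h.2.2]
  rw [sum_comm]
  refine sum_congr rfl fun w _ => ?_
  rw [← mul_sum, sum_ite_eq]

theorem IsMixture.isRSCF (h : IsMixture φ k lam F) : IsRSCF φ := by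
  refine fun P => ⟨fun a => ?_, ?_⟩
  · rw [h.2.2]
    exact sum_nonneg fun w _ => mul_nonneg (h.1 w) (by split_ifs <;> norm_num)
  · simpa [probOn, h.2.1] using h.probOn_eq P univ

theorem IsMixture.le_apply (h : IsMixture φ k lam F) (w : Fin k) (P : Profile m n) :
    lam w ≤ φ P (F w P) := by
  rw [h.2.2]
  simpa using single_le_sum (f := fun v => lam v * if F v P = F w P then (1 : ℝ) else 0)
    (fun v _ => mul_nonneg (h.1 v) (by split_ifs <;> norm_num)) (mem_univ w)

theorem IsMixture.unanimous (h : IsMixture φ k lam F) (hF : ∀ w, DUnanimous (F w)) :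
    Unanimous φ := by
  intro P a ha
  simp [h.2.2, hF _ P a ha, h.2.1]

theorem IsMixture.strategyProof (h : IsMixture φ k lam F) (hF : ∀ w, DStrategyProof (F w)) :
    StrategyProof φ := by
  intro i P P' a
  rw [h.probOn_eq, h.probOn_eq]
  refine sum_le_sum fun w _ => mul_le_mul_of_nonneg_left ?_ (h.1 w)
  by_cases hmem : F w (Function.update P i P') ∈ UC (P i) a
  · simp [hmem, hF w i P P' a hmem]
  · simp only [hmem, if_false]
    split_ifs <;> norm_num

theorem IsMixture.groupAnon {g : ℕ} (grp : Fin n → Fin g) (h : IsMixture φ k lam F)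
    (hF : ∀ w, DGroupAnon grp (F w)) : GroupAnon grp φ := by
  intro π hπ P
  funext a
  simp only [h.2.2, ← hF _ π hπ P]

end Mixture

section Clamp

variable {m n : ℕ}

noncomputable def clampRule (c : Fin (m + 1)) (P : Profile m n) : Fin (m + 1) :=
  max (univ.inf fun i => peak (P i)) (min c (univ.sup fun i => peak (P i)))

theorem clampRule_dUnanimous (hn : 0 < n) (c : Fin (m + 1)) :
    DUnanimous (clampRule (n := n) c) := by
  intro P a ha
  have hne : (univ : Finset (Fin n)).Nonempty := ⟨⟨0, hn⟩, mem_univ _⟩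
  simp only [clampRule, ha, inf_const hne, sup_const hne]
  exact max_eq_left (min_le_right _ _)

theorem clampRule_dGroupAnon {g : ℕ} (grp : Fin n → Fin g) (c : Fin (m + 1)) :
    DGroupAnon grp (clampRule c) := by
  intro π _ P
  have hinf := inf_map univ π.toEmbedding fun i => peak (P i)
  have hsup := sup_map univ π.toEmbedding fun i => peak (P i)
  rw [map_univ_equiv] at hinf hsup
  simp only [clampRule, hinf, hsup]
  rfl

theorem clampRule_update_between (c : Fin (m + 1)) (P : Profile m n) (i : Fin n)
    (P' : SPPref m) :
    (peak (P i) ≤ clampRule c P ∧ clampRule c P ≤ clampRule c (Function.update P i P')) ∨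
      (clampRule c (Function.update P i P') ≤ clampRule c P ∧ clampRule c P ≤ peak (P i)) := by
  have hothers : ∀ j ∈ univ.erase i, peak (Function.update P i P' j) = peak (P j) :=
    fun j hj => by rw [Function.update_of_ne (mem_erase.mp hj).1]
  have hinf : ∀ f : Fin n → Fin (m + 1), univ.inf f = f i ⊓ (univ.erase i).inf f := fun f => by
    rw [← inf_insert, insert_erase (mem_univ i)]
  have hsup : ∀ f : Fin n → Fin (m + 1), univ.sup f = f i ⊔ (univ.erase i).sup f := fun f => by
    rw [← sup_insert, insert_erase (mem_univ i)]
  simp only [clampRule]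
  rw [hinf, hsup, hinf, hsup, Function.update_self, inf_congr rfl hothers, sup_congr rfl hothers]
  grind

theorem clampRule_dStrategyProof (c : Fin (m + 1)) : DStrategyProof (clampRule (n := n) c) :=
  dStrategyProof_of_between fun i P P' => clampRule_update_between c P i P'

theorem clampRule_mem_Icc {c x y a : Fin (m + 1)} (hxc : x ≤ c) (hcy : c ≤ y)
    (ha : a ∈ Icc x y) {P : Profile m n} {i j : Fin n} (hi : peak (P i) ≤ a)
    (hj : a ≤ peak (P j)) : clampRule c P ∈ Icc x y := by
  obtain ⟨hxa, hay⟩ := mem_Icc.mp ha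
  have hlo : (univ.inf fun i => peak (P i)) ≤ y := (inf_le (mem_univ i)).trans (hi.trans hay)
  have hhi : x ≤ univ.sup fun i => peak (P i) :=
    hxa.trans (hj.trans (le_sup (f := fun i => peak (P i)) (mem_univ j)))
  exact mem_Icc.mpr ⟨le_max_of_le_right (le_min hxc hhi), max_le hlo ((min_le_left _ _).trans hcy)⟩

end Clamp

def cutoff (m k : ℕ) (t : Fin ((m + 1) / k)) : Fin (m + 1) :=
  ⟨(t + 1) * k - 1, by have := Nat.mul_le_of_le_div k (t + 1) (m + 1) t.isLt; omega⟩

theorem exists_cutoff_mem_Icc {m k : ℕ} (hk : 0 < k) {x y : Fin (m + 1)}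
    (hxy : (x : ℕ) + k ≤ y + 1) : ∃ t, cutoff m k t ∈ Icc x y := by
  have hlow := Nat.div_mul_le_self x k
  have hhigh := Nat.lt_div_mul_add (a := x) hk
  have hmul : (x / k + 1) * k = x / k * k + k := by ring
  have ht : x / k < (m + 1) / k :=
    (Nat.le_div_iff_mul_le hk (x := x / k + 1)).mpr (by have := y.isLt; omega)
  refine ⟨⟨x / k, ht⟩, mem_Icc.mpr ⟨?_, ?_⟩⟩ <;>
    simp only [cutoff, Fin.le_def] <;> omega

theorem exists_clampRule_cutoff_mem {m n g k : ℕ} (hk : 0 < k) {grp : Fin n → Fin g}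
    {κ : Fin g → ℕ} (hkκ : ∀ q, k ≤ κ q) {ψ : RepScenario m grp} (hψ : Compliant grp κ ψ)
    (P : Profile m n) (q : Fin g) :
    ∃ t, clampRule (cutoff m k t) P ∈ ψ q (restrict grp P q) := by
  obtain ⟨htop, hint⟩ := hψ q
  obtain ⟨x, y, -, hlen, hψq⟩ := hint (restrict grp P q)
  obtain ⟨a, ha, i, j, hi, hj⟩ := htop (restrict grp P q)
  rw [hψq] at ha ⊢
  obtain ⟨t, ht⟩ := exists_cutoff_mem_Icc hk (x := x) (y := y) (by have := hkκ q; omega)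
  obtain ⟨hxt, hty⟩ := mem_Icc.mp ht
  exact ⟨t, clampRule_mem_Icc hxt hty ha hi hj⟩

theorem exists_strongFair_of_small_quotas_general {m n g : ℕ} (hn : 2 ≤ n) (hg : 0 < g)
    (grp : Fin n → Fin g)
    (κ : Fin g → ℕ) (hκ : ∀ q, 1 ≤ κ q ∧ κ q ≤ m + 1)
    (η : Fin g → ℝ)
    (hcase : (((m + 1) / Finset.univ.inf' ⟨⟨0, hg⟩, Finset.mem_univ _⟩ κ : ℕ) : ℝ) *
        Finset.univ.sup' ⟨⟨0, hg⟩, Finset.mem_univ _⟩ η ≤ 1)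
    (ψ : RepScenario m grp) (hψ : Compliant grp κ ψ) :
    ∃ φ : RSCF m n, IsRSCF φ ∧ Unanimous φ ∧ StrategyProof φ ∧
      GroupAnon grp φ ∧ GroupStrongFair grp ψ η φ := by
  set k := univ.inf' ⟨⟨0, hg⟩, mem_univ _⟩ κ
  have hkκ : ∀ q, k ≤ κ q := fun q => inf'_le κ (mem_univ q)
  have hk : 0 < k := le_inf' _ κ fun q _ => (hκ q).1
  have hr : 0 < (m + 1) / k := Nat.div_pos ((hkκ ⟨0, hg⟩).trans (hκ _).2) hk
  have hquota : ∀ q, η q ≤ (((m + 1) / k : ℕ) : ℝ)⁻¹ := fun q => by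
    have hmax := (le_inv_mul_iff₀ (by positivity : (0 : ℝ) < ((m + 1) / k : ℕ))).2 hcase
    rw [mul_one] at hmax
    exact (le_sup' η (mem_univ q)).trans hmax
  have hφ := isMixture_uniform hr fun t => clampRule (n := n) (cutoff m k t)
  refine ⟨_, hφ.isRSCF, hφ.unanimous fun _ => clampRule_dUnanimous (by omega) _,
    hφ.strategyProof fun _ => clampRule_dStrategyProof _,
    hφ.groupAnon grp fun _ => clampRule_dGroupAnon grp _, fun P q => ?_⟩
  obtain ⟨t, ht⟩ := exists_clampRule_cutoff_mem hk hkκ hψ P q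
  exact ⟨_, ht, (hquota q).trans (hφ.le_apply t P)⟩

/-- If `⌊(m+1)/κ_min⌋ · η_max ≤ 1`, then a unanimous,
strategy-proof, group-wise anonymous and strongly group-fair RSCF exists. -/
theorem exists_strongFair_of_small_quotas {m n g : ℕ} (hn : 2 ≤ n) (hg : 0 < g)
    (grp : Fin n → Fin g) (hsurj : Function.Surjective grp)
    (κ : Fin g → ℕ) (hκ : ∀ q, 1 ≤ κ q ∧ κ q ≤ m + 1)
    (η : Fin g → ℝ) (hη : ∀ q, 0 ≤ η q ∧ η q ≤ 1)
    (hcase : (((m + 1) / Finset.univ.inf' ⟨⟨0, hg⟩, Finset.mem_univ _⟩ κ : ℕ) : ℝ) *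
        Finset.univ.sup' ⟨⟨0, hg⟩, Finset.mem_univ _⟩ η ≤ 1)
    (ψ : RepScenario m grp) (hψ : Compliant grp κ ψ) :
    ∃ φ : RSCF m n, IsRSCF φ ∧ Unanimous φ ∧ StrategyProof φ ∧
      GroupAnon grp φ ∧ GroupStrongFair grp ψ η φ :=
  exists_strongFair_of_small_quotas_general hn hg grp κ hκ η hcase ψ hψ
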